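/- arXiv:0705.3045 — 2 statements merged into one kernel-verified Lean document; each statement's English description precedes it below -/
import Mathlib

section
/- Let s, r ≥ 0 and t ∈ ℝ with t ≤ min(s, r) and s + r − t > 1/2. Then there is a constant C > 0 such that for all two-sided sequences a ∈ h^r and b ∈ h^s, the convolution a*b defined by (a*b)(k) = Σ_{j∈ℤ} a(k−j)b(j) satisfies ‖a*b‖_{h^t} ≤ C‖a‖_{h^r}‖b‖_{h^s}. -/
/- STATEMENT 0 (Convolution lemma, part I(a)):
For s, r ≥ 0, t ≤ min(s,r), s + r − t > 1/2, the convolution map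
h^r × h^s → h^t is bounded:  ‖a*b‖_{h^t} ≤ C ‖a‖_{h^r} ‖b‖_{h^s}.
Weighted sequence spaces h^s are modelled by their defining
summability condition and norm, with ⟨k⟩ = 1 + |k|. -/

noncomputable section

/-- Convolution of two-sided sequences: `(a*b)(k) = Σ_j a(k−j) b(j)`. -/
def conv (a b : ℤ → ℂ) (k : ℤ) : ℂ := ∑' j : ℤ, a (k - j) * b j

/-- Membership in the weighted space `h^s`. -/
def memh (s : ℝ) (a : ℤ → ℂ) : Prop :=
  Summable fun k : ℤ => ((1 + |k| : ℝ)) ^ (2 * s) * ‖a k‖ ^ 2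

/-- The `h^s` norm: `(Σ_k ⟨k⟩^{2s} |a(k)|²)^{1/2}` with `⟨k⟩ = 1 + |k|`. -/
def hnorm (s : ℝ) (a : ℤ → ℂ) : ℝ :=
  (∑' k : ℤ, ((1 + |k| : ℝ)) ^ (2 * s) * ‖a k‖ ^ 2) ^ ((1 : ℝ) / 2)

/-! Write ⟨k⟩ = 1 + |k| and E = r + s - t. Since ⟨k⟩ ≤ ⟨k - j⟩ + ⟨j⟩, splitting according to
which of ⟨k⟩, ⟨k - j⟩, ⟨j⟩ is smallest gives
  ⟨k⟩^t ≤ 2^|t| (⟨k⟩^(-E) + ⟨k - j⟩^(-E) + ⟨j⟩^(-E)) ⟨k - j⟩^r ⟨j⟩^s.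
With F = ⟨·⟩^r |a|, G = ⟨·⟩^s |b| and H = ⟨·⟩^(-E) this bounds ⟨k⟩^t |a * b|(k) by
H (F * G) + (H F) * G + F * (H G). As E > 1/2, H lies in ℓ², so H F and H G lie in ℓ¹ by
Cauchy–Schwarz; the first term is then controlled by Cauchy–Schwarz pointwise and the other two
by Young's inequality ℓ¹ * ℓ² ⊆ ℓ². All sums are taken in ℝ≥0∞, so no summability has to be
checked until the very end. -/

open scoped ENNReal

namespace ENNReal

variable {ι : Type*}

theorem rpow_two_inv_sq (x : ℝ≥0∞) : (x ^ (2⁻¹ : ℝ)) ^ 2 = x := by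
  simpa using rpow_inv_natCast_pow two_ne_zero x

theorem sq_tsum_mul_le (f g : ι → ℝ≥0∞) :
    (∑' i, f i * g i) ^ 2 ≤ (∑' i, f i ^ 2) * ∑' i, g i ^ 2 := by
  have holder : ∑' i, f i * g i ≤ (∑' i, f i ^ 2) ^ (2⁻¹ : ℝ) * (∑' i, g i ^ 2) ^ (2⁻¹ : ℝ) := by
    rw [ENNReal.tsum_eq_iSup_sum]
    refine iSup_le fun s => (inner_le_Lp_mul_Lq s f g .two_two).trans ?_
    simp only [rpow_two, one_div]
    gcongr <;> exact ENNReal.sum_le_tsum s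
  calc _ ≤ ((∑' i, f i ^ 2) ^ (2⁻¹ : ℝ) * (∑' i, g i ^ 2) ^ (2⁻¹ : ℝ)) ^ 2 := by gcongr
    _ = _ := by rw [mul_pow, rpow_two_inv_sq, rpow_two_inv_sq]

theorem sq_tsum_mul_le_tsum_mul_tsum_mul_sq (w f : ι → ℝ≥0∞) :
    (∑' i, w i * f i) ^ 2 ≤ (∑' i, w i) * ∑' i, w i * f i ^ 2 := by
  have holder : ∑' i, w i * f i ≤
      (∑' i, w i) ^ (2⁻¹ : ℝ) * (∑' i, w i * f i ^ 2) ^ (2⁻¹ : ℝ) := by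
    rw [ENNReal.tsum_eq_iSup_sum]
    refine iSup_le fun s => (inner_le_weight_mul_Lp_of_nonneg s one_le_two w f).trans ?_
    rw [show (1 : ℝ) - 2⁻¹ = 2⁻¹ by norm_num]
    simp only [rpow_two]
    gcongr <;> exact ENNReal.sum_le_tsum s
  calc _ ≤ ((∑' i, w i) ^ (2⁻¹ : ℝ) * (∑' i, w i * f i ^ 2) ^ (2⁻¹ : ℝ)) ^ 2 := by gcongr
    _ = _ := by rw [mul_pow, rpow_two_inv_sq, rpow_two_inv_sq]

theorem sqrt_toReal_le_of_le_mul {x c a b : ℝ≥0∞} (hc : c ≠ ⊤) (ha : a ≠ ⊤) (hb : b ≠ ⊤)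
    (h : x ≤ c * (a * b)) : √x.toReal ≤ √c.toReal * √a.toReal * √b.toReal := by
  calc √x.toReal ≤ √(c * (a * b)).toReal := by gcongr; finiteness
    _ = √c.toReal * √a.toReal * √b.toReal := by
      rw [toReal_mul, toReal_mul, Real.sqrt_mul toReal_nonneg, Real.sqrt_mul toReal_nonneg,
        mul_assoc]

theorem add_add_sq_le (x y z : ℝ≥0∞) : (x + y + z) ^ 2 ≤ 3 * (x ^ 2 + y ^ 2 + z ^ 2) := by
  have := rpow_sum_le_const_mul_sum_rpow Finset.univ ![x, y, z] one_le_two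
  simpa [Fin.sum_univ_three, rpow_two, show (2 : ℝ) - 1 = 1 by norm_num] using this

end ENNReal

section Convolution

variable {G : Type*} [AddCommGroup G]

theorem tsum_sub_left_eq {M : Type*} [AddCommMonoid M] [TopologicalSpace M] (f : G → M)
    (k : G) : ∑' j, f (k - j) = ∑' j, f j :=
  (Equiv.subLeft k).tsum_eq f

theorem tsum_sub_right_eq {M : Type*} [AddCommMonoid M] [TopologicalSpace M] (f : G → M)
    (j : G) : ∑' k, f (k - j) = ∑' k, f k :=
  (Equiv.subRight j).tsum_eq f

variable (u v : G → ℝ≥0∞)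

def ennConv (k : G) : ℝ≥0∞ := ∑' j, u (k - j) * v j

theorem ennConv_comm : ennConv u v = ennConv v u := by
  ext k
  rw [ennConv, ← tsum_sub_left_eq _ k]
  simp only [sub_sub_cancel, ennConv, mul_comm]

theorem tsum_ennConv : ∑' k, ennConv u v k = (∑' i, u i) * ∑' j, v j := by
  simp only [ennConv]
  rw [ENNReal.tsum_comm, ← ENNReal.tsum_mul_left]
  refine tsum_congr fun j => ?_
  rw [ENNReal.tsum_mul_right, tsum_sub_right_eq]

theorem sq_ennConv_le (k : G) : ennConv u v k ^ 2 ≤ (∑' i, u i ^ 2) * ∑' j, v j ^ 2 := by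
  calc ennConv u v k ^ 2 ≤ (∑' j, u (k - j) ^ 2) * ∑' j, v j ^ 2 := ENNReal.sq_tsum_mul_le _ v
    _ = _ := by rw [tsum_sub_left_eq (fun i => u i ^ 2) k]

theorem tsum_sq_ennConv_le : ∑' k, ennConv u v k ^ 2 ≤ (∑' i, u i) ^ 2 * ∑' j, v j ^ 2 := by
  have pointwise (k : G) : ennConv u v k ^ 2 ≤ (∑' i, u i) * ennConv u (v ^ 2) k := by
    calc ennConv u v k ^ 2 ≤ (∑' j, u (k - j)) * ennConv u (v ^ 2) k :=
          ENNReal.sq_tsum_mul_le_tsum_mul_tsum_mul_sq _ v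
      _ = _ := by rw [tsum_sub_left_eq]
  calc ∑' k, ennConv u v k ^ 2 ≤ ∑' k, (∑' i, u i) * ennConv u (v ^ 2) k :=
        ENNReal.tsum_le_tsum pointwise
    _ = _ := by rw [ENNReal.tsum_mul_left, tsum_ennConv, ← mul_assoc, ← sq]; rfl

theorem tsum_sq_ennConv_mul_le (h : G → ℝ≥0∞) :
    ∑' k, ennConv (h * u) v k ^ 2 ≤ (∑' i, h i ^ 2) * (∑' i, u i ^ 2) * ∑' j, v j ^ 2 := by
  calc _ ≤ (∑' i, h i * u i) ^ 2 * ∑' j, v j ^ 2 := tsum_sq_ennConv_le _ _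
    _ ≤ _ := by gcongr; exact ENNReal.sq_tsum_mul_le h u

end Convolution

section WeightInequality

variable {x y z r s t : ℝ}

theorem rpow_le_two_rpow_mul_of_le_of_le (hy : 0 < y) (hyx : y ≤ x) (hyz : y ≤ z)
    (hxyz : x ≤ y + z) (hs : 0 ≤ s) (hts : t ≤ s) :
    x ^ t ≤ 2 ^ |t| * (y ^ (t - s) * z ^ s) := by
  have hx : 0 < x := hy.trans_le hyx
  have hz : 0 < z := hy.trans_le hyz
  rcases le_total t 0 with ht | ht
  · calc x ^ t ≤ y ^ t := Real.rpow_le_rpow_of_nonpos hy hyx ht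
      _ = y ^ (t - s) * y ^ s := by rw [← Real.rpow_add hy, sub_add_cancel]
      _ ≤ y ^ (t - s) * z ^ s := by gcongr
      _ ≤ 2 ^ |t| * (y ^ (t - s) * z ^ s) :=
        le_mul_of_one_le_left (by positivity) (Real.one_le_rpow one_le_two (abs_nonneg t))
  · calc x ^ t ≤ (2 * z) ^ t := Real.rpow_le_rpow hx.le (by linarith) ht
      _ = 2 ^ |t| * (z ^ (t - s) * z ^ s) := by
        rw [Real.mul_rpow zero_le_two hz.le, abs_of_nonneg ht, ← Real.rpow_add hz, sub_add_cancel]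
      _ ≤ 2 ^ |t| * (y ^ (t - s) * z ^ s) := by
        gcongr ?_ * (?_ * _)
        exact Real.rpow_le_rpow_of_nonpos hy hyz (by linarith)

theorem rpow_le_two_rpow_mul_sum_rpow_mul (hx : 0 < x) (hy : 0 < y) (hz : 0 < z)
    (hxyz : x ≤ y + z) (hr : 0 ≤ r) (hs : 0 ≤ s) (htr : t ≤ r) (hts : t ≤ s) :
    x ^ t ≤ 2 ^ |t| * ((x ^ (t - r - s) + y ^ (t - r - s) + z ^ (t - r - s)) * (y ^ r * z ^ s)) := by
  suffices ∃ m, m ^ (t - r - s) ≤ x ^ (t - r - s) + y ^ (t - r - s) + z ^ (t - r - s) ∧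
      x ^ t ≤ 2 ^ |t| * (m ^ (t - r - s) * (y ^ r * z ^ s)) by
    obtain ⟨m, hm, h⟩ := this
    exact h.trans (by gcongr)
  have hxe := Real.rpow_pos_of_pos hx (t - r - s)
  have hye := Real.rpow_pos_of_pos hy (t - r - s)
  have hze := Real.rpow_pos_of_pos hz (t - r - s)
  rcases le_total x (min y z) with hmin | hmin
  · refine ⟨x, by linarith, ?_⟩
    obtain ⟨hxy, hxz⟩ := le_min_iff.mp hmin
    calc x ^ t = x ^ (t - r - s) * (x ^ r * x ^ s) := by
          rw [← Real.rpow_add hx, ← Real.rpow_add hx]; ring_nf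
      _ ≤ x ^ (t - r - s) * (y ^ r * z ^ s) := by gcongr
      _ ≤ 2 ^ |t| * (x ^ (t - r - s) * (y ^ r * z ^ s)) :=
        le_mul_of_one_le_left (by positivity) (Real.one_le_rpow one_le_two (abs_nonneg t))
  rcases le_total y z with hyz | hzy
  · refine ⟨y, by linarith, ?_⟩
    rw [min_eq_left hyz] at hmin
    calc x ^ t ≤ 2 ^ |t| * (y ^ (t - s) * z ^ s) :=
          rpow_le_two_rpow_mul_of_le_of_le hy hmin hyz hxyz hs hts
      _ = 2 ^ |t| * (y ^ (t - r - s) * (y ^ r * z ^ s)) := by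
        rw [← mul_assoc (y ^ _), ← Real.rpow_add hy]; ring_nf
  · refine ⟨z, by linarith, ?_⟩
    rw [min_eq_right hzy] at hmin
    calc x ^ t ≤ 2 ^ |t| * (z ^ (t - r) * y ^ r) :=
          rpow_le_two_rpow_mul_of_le_of_le hz hmin hzy (by linarith) hr htr
      _ = 2 ^ |t| * (z ^ (t - r - s) * (y ^ r * z ^ s)) := by
        rw [mul_left_comm (z ^ _), ← Real.rpow_add hz]; ring_nf

end WeightInequality

def bracket (k : ℤ) : ℝ := 1 + |k|

theorem bracket_pos (k : ℤ) : 0 < bracket k := by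
  unfold bracket; positivity

theorem bracket_le_bracket_sub_add (k j : ℤ) : bracket k ≤ bracket (k - j) + bracket j := by
  have := abs_add_le (k - j) j
  simp only [bracket, sub_add_cancel] at this ⊢
  have h : ((|k| : ℤ) : ℝ) ≤ |k - j| + |j| := by exact_mod_cast this
  linarith

-- Comparing with |k + 1/2| rather than |k| avoids the singular term k = 0.
theorem summable_bracket_rpow_neg {p : ℝ} (hp : 1 < p) :
    Summable fun k => bracket k ^ (-p) := by
  refine ((Real.summable_one_div_int_add_rpow (1 / 2) p).mpr hp).of_nonneg_of_le
    (fun k => (Real.rpow_pos_of_pos (bracket_pos k) _).le) fun k => ?_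
  have hk : 0 < |(k : ℝ) + 1 / 2| := by
    refine abs_pos.mpr fun h => ?_
    have : (2 * k + 1 : ℤ) = 0 := by exact_mod_cast (by linarith : (2 * k + 1 : ℝ) = 0)
    omega
  have hle : |(k : ℝ) + 1 / 2| ≤ bracket k := by
    have := abs_add_le (k : ℝ) (1 / 2)
    rw [abs_of_pos (by norm_num : (0 : ℝ) < 1 / 2)] at this
    simp only [bracket, Int.cast_abs]
    linarith
  rw [Real.rpow_neg (bracket_pos k).le, one_div]
  gcongr

def weight (x : ℝ) (k : ℤ) : ℝ≥0∞ := ENNReal.ofReal (bracket k ^ x)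

theorem weight_sq (x : ℝ) (k : ℤ) : weight x k ^ 2 = weight (2 * x) k := by
  rw [weight, weight, ← ENNReal.ofReal_pow (Real.rpow_nonneg (bracket_pos k).le _),
    ← Real.rpow_natCast, ← Real.rpow_mul (bracket_pos k).le, mul_comm]
  norm_num

theorem tsum_weight_sq_ne_top {e : ℝ} (he : e < -1 / 2) : ∑' k, weight e k ^ 2 ≠ ⊤ := by
  simp only [weight_sq]
  simpa [weight] using (summable_bracket_rpow_neg (p := -(2 * e)) (by linarith)).tsum_ofReal_ne_top

section WeightedConvolution

variable {r s t : ℝ}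

theorem weight_le_two_rpow_mul_sum_weight_mul (hr : 0 ≤ r) (hs : 0 ≤ s) (htr : t ≤ r) (hts : t ≤ s) (k j : ℤ) :
    weight t k ≤ ENNReal.ofReal (2 ^ |t|) *
      ((weight (t - r - s) k + weight (t - r - s) (k - j) + weight (t - r - s) j) *
        (weight r (k - j) * weight s j)) := by
  have h := rpow_le_two_rpow_mul_sum_rpow_mul (bracket_pos k) (bracket_pos (k - j))
    (bracket_pos j) (bracket_le_bracket_sub_add k j) hr hs htr hts (t := t)
  have hw (x : ℝ) (i : ℤ) : 0 ≤ bracket i ^ x := Real.rpow_nonneg (bracket_pos i).le x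
  simp only [weight]
  rw [← ENNReal.ofReal_add (hw _ _) (hw _ _),
    ← ENNReal.ofReal_add (add_nonneg (hw _ _) (hw _ _)) (hw _ _), ← ENNReal.ofReal_mul (hw _ _),
    ← ENNReal.ofReal_mul (add_nonneg (add_nonneg (hw _ _) (hw _ _)) (hw _ _)),
    ← ENNReal.ofReal_mul (by positivity)]
  exact ENNReal.ofReal_le_ofReal h

theorem weight_mul_ennConv_le (hr : 0 ≤ r) (hs : 0 ≤ s) (htr : t ≤ r) (hts : t ≤ s)
    (u v : ℤ → ℝ≥0∞) (k : ℤ) :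
    weight t k * ennConv u v k ≤ ENNReal.ofReal (2 ^ |t|) *
      (weight (t - r - s) k * ennConv (weight r * u) (weight s * v) k +
        ennConv (weight (t - r - s) * (weight r * u)) (weight s * v) k +
        ennConv (weight r * u) (weight (t - r - s) * (weight s * v)) k) := by
  set H := weight (t - r - s)
  calc weight t k * ennConv u v k = ∑' j, weight t k * (u (k - j) * v j) :=
        ENNReal.tsum_mul_left.symm
    _ ≤ ∑' j, ENNReal.ofReal (2 ^ |t|) * ((H k + H (k - j) + H j) *
          (weight r (k - j) * weight s j)) * (u (k - j) * v j) :=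
        ENNReal.tsum_le_tsum fun j => by gcongr; exact weight_le_two_rpow_mul_sum_weight_mul hr hs htr hts k j
    _ = ENNReal.ofReal (2 ^ |t|) * ∑' j,
          (H k * ((weight r * u) (k - j) * (weight s * v) j) +
            (H * (weight r * u)) (k - j) * (weight s * v) j +
            (weight r * u) (k - j) * (H * (weight s * v)) j) := by
        rw [← ENNReal.tsum_mul_left]
        congr 1 with j
        simp only [Pi.mul_apply]
        ring
    _ = _ := by
        rw [ENNReal.tsum_add, ENNReal.tsum_add, ENNReal.tsum_mul_left]
        rfl

theorem tsum_sq_weight_mul_ennConv_le (hr : 0 ≤ r) (hs : 0 ≤ s) (htr : t ≤ r) (hts : t ≤ s)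
    (u v : ℤ → ℝ≥0∞) :
    ∑' k, (weight t k * ennConv u v k) ^ 2 ≤
      9 * ENNReal.ofReal (2 ^ |t|) ^ 2 * (∑' k, weight (t - r - s) k ^ 2) *
        ((∑' k, (weight r k * u k) ^ 2) * ∑' k, (weight s k * v k) ^ 2) := by
  set c := ENNReal.ofReal (2 ^ |t|)
  set H := weight (t - r - s)
  set F := weight r * u
  set G := weight s * v
  change _ ≤ _ * ((∑' k, F k ^ 2) * ∑' k, G k ^ 2)
  set Z := ∑' k, H k ^ 2
  set PF := ∑' k, F k ^ 2
  set PG := ∑' k, G k ^ 2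
  have h₀ : ∑' k, (H k * ennConv F G k) ^ 2 ≤ Z * PF * PG :=
    calc ∑' k, (H k * ennConv F G k) ^ 2 ≤ ∑' k, H k ^ 2 * (PF * PG) :=
          ENNReal.tsum_le_tsum fun k => by rw [mul_pow]; gcongr; exact sq_ennConv_le F G k
      _ = Z * PF * PG := by rw [ENNReal.tsum_mul_right, mul_assoc]
  have h₁ : ∑' k, ennConv (H * F) G k ^ 2 ≤ Z * PF * PG := tsum_sq_ennConv_mul_le F G H
  have h₂ : ∑' k, ennConv F (H * G) k ^ 2 ≤ Z * PF * PG := by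
    rw [ennConv_comm]
    exact (tsum_sq_ennConv_mul_le G F H).trans_eq (by ring)
  calc ∑' k, (weight t k * ennConv u v k) ^ 2
      ≤ ∑' k, c ^ 2 * (3 * ((H k * ennConv F G k) ^ 2 + ennConv (H * F) G k ^ 2 +
          ennConv F (H * G) k ^ 2)) :=
        ENNReal.tsum_le_tsum fun k => by
          grw [weight_mul_ennConv_le hr hs htr hts u v k, mul_pow, ENNReal.add_add_sq_le]
    _ = c ^ 2 * 3 * (∑' k, (H k * ennConv F G k) ^ 2 + ∑' k, ennConv (H * F) G k ^ 2 +
          ∑' k, ennConv F (H * G) k ^ 2) := by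
        rw [ENNReal.tsum_mul_left, ENNReal.tsum_mul_left, ENNReal.tsum_add, ENNReal.tsum_add,
          mul_assoc]
    _ ≤ c ^ 2 * 3 * (Z * PF * PG + Z * PF * PG + Z * PF * PG) := by gcongr
    _ = 9 * c ^ 2 * Z * (PF * PG) := by ring

theorem enorm_conv_le (a b : ℤ → ℂ) (k : ℤ) : ‖conv a b k‖ₑ ≤ ennConv (‖a ·‖ₑ) (‖b ·‖ₑ) k :=
  enorm_tsum_le_tsum_enorm.trans_eq (by simp only [ennConv, enorm_mul])

def ehnormSq (x : ℝ) (a : ℤ → ℂ) : ℝ≥0∞ := ∑' k, (weight x k * ‖a k‖ₑ) ^ 2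

theorem ehnormSq_conv_le (hr : 0 ≤ r) (hs : 0 ≤ s) (htr : t ≤ r) (hts : t ≤ s) (a b : ℤ → ℂ) :
    ehnormSq t (conv a b) ≤ 9 * ENNReal.ofReal (2 ^ |t|) ^ 2 *
      (∑' k, weight (t - r - s) k ^ 2) * (ehnormSq r a * ehnormSq s b) :=
  (ENNReal.tsum_le_tsum fun k => by grw [enorm_conv_le]).trans
    (tsum_sq_weight_mul_ennConv_le hr hs htr hts _ _)

end WeightedConvolution

theorem weight_mul_enorm_sq (x : ℝ) (a : ℤ → ℂ) (k : ℤ) :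
    (weight x k * ‖a k‖ₑ) ^ 2 = ENNReal.ofReal ((1 + |k| : ℝ) ^ (2 * x) * ‖a k‖ ^ 2) := by
  rw [mul_pow, weight_sq, weight, ← ofReal_norm, ← ENNReal.ofReal_pow (norm_nonneg _),
    ← ENNReal.ofReal_mul (Real.rpow_nonneg (bracket_pos k).le _)]
  rfl

theorem memh_iff_ehnormSq_ne_top (x : ℝ) (a : ℤ → ℂ) : memh x a ↔ ehnormSq x a ≠ ⊤ := by
  simp only [ehnormSq, weight_mul_enorm_sq]
  refine ⟨Summable.tsum_ofReal_ne_top, fun h => (ENNReal.summable_toReal h).congr fun k => ?_⟩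
  exact ENNReal.toReal_ofReal (by positivity)

theorem hnorm_eq_sqrt_toReal (x : ℝ) (a : ℤ → ℂ) : hnorm x a = √(ehnormSq x a).toReal := by
  simp only [hnorm, Real.sqrt_eq_rpow, ehnormSq, weight_mul_enorm_sq]
  rw [ENNReal.tsum_toReal_eq fun k => ENNReal.ofReal_ne_top]
  congr 2 with k
  exact (ENNReal.toReal_ofReal (by positivity)).symm

theorem convolution_lemma_Ia (s r t : ℝ) (hs : 0 ≤ s) (hr : 0 ≤ r)
    (ht : t ≤ min s r) (hsrt : 1 / 2 < s + r - t) :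
    ∃ C > (0 : ℝ), ∀ a b : ℤ → ℂ, memh r a → memh s b →
      memh t (conv a b) ∧ hnorm t (conv a b) ≤ C * hnorm r a * hnorm s b := by
  obtain ⟨hts, htr⟩ := le_min_iff.mp ht
  set K := 9 * ENNReal.ofReal (2 ^ |t|) ^ 2 * ∑' k, weight (t - r - s) k ^ 2
  have hK : K ≠ ⊤ := by
    have := tsum_weight_sq_ne_top (e := t - r - s) (by linarith)
    finiteness
  refine ⟨√K.toReal + 1, by positivity, fun a b ha hb => ?_⟩
  rw [memh_iff_ehnormSq_ne_top] at ha hb ⊢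
  have hconv := ehnormSq_conv_le hr hs htr hts a b
  refine ⟨ne_top_of_le_ne_top (by finiteness) hconv, ?_⟩
  simp only [hnorm_eq_sqrt_toReal]
  grw [ENNReal.sqrt_toReal_le_of_le_mul hK ha hb hconv]
  gcongr
  linarith
end
end

section
/- Let s, r ≥ 0 and t ∈ ℝ with t ≤ min(s, r) and s + r − t < 1/2. Then the convolution map h^r × h^s → h^t is not bounded: there exist sequences a ∈ h^r and b ∈ h^s such that a*b ∉ h^t (or the bilinear map fails to be continuous). -/
/- STATEMENT 2 (Convolution lemma, part II):
For s, r ≥ 0, t ≤ min(s,r), s + r − t < 1/2, the convolution map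
h^r × h^s → h^t is NOT bounded: either some a ∈ h^r, b ∈ h^s have
a*b ∉ h^t, or no continuity constant C exists. -/

noncomputable section

lemma base_pos (k : ℤ) : (0:ℝ) < 1 + |k| := by positivity

lemma summable_pow_int {q : ℝ} (hq : 1 < q) :
    Summable fun k : ℤ => ((1 + |k| : ℝ)) ^ (-q) := by
  have hnat : Summable fun n : ℕ => ((1 + (n : ℝ))) ^ (-q) := by
    have h0 : Summable fun n : ℕ => ((n : ℝ)) ^ (-q) :=
      Real.summable_nat_rpow.2 (by linarith)
    have := (summable_nat_add_iff 1).2 h0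
    refine this.congr fun n => ?_
    push_cast
    ring_nf
  refine Summable.of_nat_of_neg ?_ ?_ <;>
    refine hnat.congr fun n => ?_ <;> simp

/-- norm of the power sequence -/
lemma norm_pow_seq (α : ℝ) (k : ℤ) :
    ‖((((1 + |k| : ℝ)) ^ (-α) : ℝ) : ℂ)‖ = ((1 + |k| : ℝ)) ^ (-α) := by
  rw [Complex.norm_real, Real.norm_eq_abs, abs_of_nonneg (Real.rpow_nonneg (base_pos k).le _)]

lemma memh_pow {c α : ℝ} (h : 1 < 2 * α - 2 * c) :
    memh c (fun k : ℤ => ((((1 + |k| : ℝ)) ^ (-α) : ℝ) : ℂ)) := by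
  unfold memh
  refine (summable_pow_int (q := 2 * α - 2 * c) h).congr fun k => ?_
  rw [norm_pow_seq]
  have hx := base_pos k
  rw [← Real.rpow_natCast (((1 + |k| : ℝ)) ^ (-α)) 2, ← Real.rpow_mul hx.le,
    ← Real.rpow_add hx]
  norm_num
  ring_nf

/-- key pointwise bound -/
lemma key_bound {α : ℝ} (hα : 0 ≤ α) (k j : ℤ) :
    ((1 + |k - j| : ℝ)) ^ (-α) ≤ ((1 + |k| : ℝ)) ^ α * ((1 + |j| : ℝ)) ^ (-α) := by
  have h1 : (1 + |j| : ℝ) ≤ (1 + |k|) * (1 + |k - j|) := by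
    have habs : |(j:ℝ)| ≤ |(k:ℝ)| + |(k:ℝ) - (j:ℝ)| := by
      have hj : (j:ℝ) = k - ((k:ℝ) - j) := by ring
      calc |(j:ℝ)| = |(k:ℝ) - ((k:ℝ) - j)| := by rw [← hj]
        _ ≤ |(k:ℝ)| + |(k:ℝ) - (j:ℝ)| := abs_sub _ _
    push_cast
    nlinarith [abs_nonneg (k:ℝ), abs_nonneg ((k:ℝ) - (j:ℝ))]
  have hbkj := base_pos (k - j)
  have hbk := base_pos k
  have hbj := base_pos j
  have h2 : ((1 + |j| : ℝ)) ^ α ≤ ((1 + |k| : ℝ)) ^ α * ((1 + |k - j| : ℝ)) ^ α := by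
    have := Real.rpow_le_rpow hbj.le h1 hα
    rwa [Real.mul_rpow hbk.le hbkj.le] at this
  have hA := Real.rpow_pos_of_pos hbj α
  have hC := Real.rpow_pos_of_pos hbkj α
  rw [Real.rpow_neg hbkj.le, Real.rpow_neg hbj.le, inv_eq_one_div, inv_eq_one_div,
    mul_one_div, div_le_div_iff₀ hC hA, one_mul]
  linarith [h2]

lemma g_summable {α β : ℝ} (hα : 0 ≤ α) (hβ : 0 ≤ β) (hab : 1 < α + β) (k : ℤ) :
    Summable fun j : ℤ => ((1 + |k - j| : ℝ)) ^ (-α) * ((1 + |j| : ℝ)) ^ (-β) := by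
  refine Summable.of_nonneg_of_le (fun j => by positivity) (fun j => ?_)
    ((summable_pow_int hab).mul_left (((1 + |k| : ℝ)) ^ α))
  calc ((1 + |k - j| : ℝ)) ^ (-α) * ((1 + |j| : ℝ)) ^ (-β)
      ≤ ((1 + |k| : ℝ)) ^ α * ((1 + |j| : ℝ)) ^ (-α) * ((1 + |j| : ℝ)) ^ (-β) :=
        mul_le_mul_of_nonneg_right (key_bound hα k j)
          (Real.rpow_nonneg (base_pos j).le _)
    _ = ((1 + |k| : ℝ)) ^ α * ((1 + |j| : ℝ)) ^ (-(α + β)) := by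
        rw [mul_assoc, ← Real.rpow_add (base_pos j), neg_add]

lemma tsum_g_lower {α β : ℝ} (hα : 0 ≤ α) (hβ : 0 ≤ β) (hab : 1 < α + β) (n : ℕ) :
    ((1 + (n : ℝ))) ^ (1 - (α + β)) ≤
      ∑' j : ℤ, ((1 + |(n : ℤ) - j| : ℝ)) ^ (-α) * ((1 + |j| : ℝ)) ^ (-β) := by
  have hpos : (0:ℝ) < 1 + (n:ℝ) := by positivity
  have hsum := g_summable hα hβ hab (n : ℤ)
  have hterm : ∀ j ∈ Finset.Icc (0:ℤ) (n:ℤ),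
      ((1 + (n:ℝ))) ^ (-α) * ((1 + (n:ℝ))) ^ (-β) ≤
      ((1 + |(n : ℤ) - j| : ℝ)) ^ (-α) * ((1 + |j| : ℝ)) ^ (-β) := by
    intro j hj
    rw [Finset.mem_Icc] at hj
    have hj0 : (0:ℝ) ≤ (j:ℝ) := by exact_mod_cast hj.1
    have hjn : (j:ℝ) ≤ (n:ℝ) := by exact_mod_cast hj.2
    have h1 : (1 + |(n : ℤ) - j| : ℝ) ≤ 1 + (n:ℝ) := by
      push_cast
      rw [abs_of_nonneg (by linarith)]
      linarith
    have h2 : (1 + |j| : ℝ) ≤ 1 + (n:ℝ) := by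
      push_cast
      rw [abs_of_nonneg hj0]
      linarith
    exact mul_le_mul (Real.rpow_le_rpow_of_nonpos (base_pos _) h1 (by linarith))
      (Real.rpow_le_rpow_of_nonpos (base_pos _) h2 (by linarith))
      (Real.rpow_nonneg hpos.le _) (Real.rpow_nonneg (base_pos _).le _)
  have hcard : (Finset.Icc (0:ℤ) (n:ℤ)).card = n + 1 := by
    rw [Int.card_Icc]
    simp
  calc ((1 + (n : ℝ))) ^ (1 - (α + β))
      = ((n:ℝ) + 1) * (((1 + (n:ℝ))) ^ (-α) * ((1 + (n:ℝ))) ^ (-β)) := by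
        rw [← Real.rpow_add hpos, sub_eq_add_neg, Real.rpow_add hpos, Real.rpow_one,
          neg_add]
        ring
    _ = ∑ _j ∈ Finset.Icc (0:ℤ) (n:ℤ),
          ((1 + (n:ℝ))) ^ (-α) * ((1 + (n:ℝ))) ^ (-β) := by
        rw [Finset.sum_const, hcard, nsmul_eq_mul]
        push_cast
        ring
    _ ≤ ∑ j ∈ Finset.Icc (0:ℤ) (n:ℤ),
          ((1 + |(n : ℤ) - j| : ℝ)) ^ (-α) * ((1 + |j| : ℝ)) ^ (-β) :=
        Finset.sum_le_sum hterm
    _ ≤ ∑' j : ℤ, ((1 + |(n : ℤ) - j| : ℝ)) ^ (-α) * ((1 + |j| : ℝ)) ^ (-β) :=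
        Summable.sum_le_tsum _ (fun j _ => by positivity) hsum

theorem convolution_lemma_II (s r t : ℝ) (hs : 0 ≤ s) (hr : 0 ≤ r)
    (ht : t ≤ min s r) (hsrt : s + r - t < 1 / 2) :
    (∃ a b : ℤ → ℂ, memh r a ∧ memh s b ∧ ¬ memh t (conv a b)) ∨
    ¬ (∃ C > (0 : ℝ), ∀ a b : ℤ → ℂ, memh r a → memh s b →
        memh t (conv a b) ∧ hnorm t (conv a b) ≤ C * hnorm r a * hnorm s b) := by
  left
  have hts : t ≤ s := ht.trans (min_le_left _ _)
  have htr : t ≤ r := ht.trans (min_le_right _ _)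
  set σ : ℝ := s + r - t with hσdef
  have hσ0 : 0 ≤ σ := by simp only [hσdef]; linarith
  set ε : ℝ := (1/2 - σ)/3 with hεdef
  have hε : 0 < ε := by simp only [hεdef]; linarith
  set α : ℝ := r + 1/2 + ε with hαdef
  set β : ℝ := s + 1/2 + ε with hβdef
  have hα0 : 0 ≤ α := by simp only [hαdef]; linarith
  have hβ0 : 0 ≤ β := by simp only [hβdef]; linarith
  have hab : 1 < α + β := by simp only [hαdef, hβdef]; linarith
  refine ⟨fun k : ℤ => ((((1 + |k| : ℝ)) ^ (-α) : ℝ) : ℂ),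
    fun k : ℤ => ((((1 + |k| : ℝ)) ^ (-β) : ℝ) : ℂ),
    memh_pow (by simp only [hαdef]; linarith),
    memh_pow (by simp only [hβdef]; linarith), ?_⟩
  intro hmem
  -- identify the convolution with a real tsum
  have hconv : ∀ k : ℤ,
      conv (fun k : ℤ => ((((1 + |k| : ℝ)) ^ (-α) : ℝ) : ℂ))
        (fun k : ℤ => ((((1 + |k| : ℝ)) ^ (-β) : ℝ) : ℂ)) k =
      ((∑' j : ℤ, ((1 + |k - j| : ℝ)) ^ (-α) * ((1 + |j| : ℝ)) ^ (-β) : ℝ) : ℂ) := by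
    intro k
    unfold conv
    rw [Complex.ofReal_tsum]
    congr 1
    funext j
    rw [← Complex.ofReal_mul]
  have hnormconv : ∀ n : ℕ,
      ((1 + (n : ℝ))) ^ (1 - (α + β)) ≤
      ‖conv (fun k : ℤ => ((((1 + |k| : ℝ)) ^ (-α) : ℝ) : ℂ))
        (fun k : ℤ => ((((1 + |k| : ℝ)) ^ (-β) : ℝ) : ℂ)) (n : ℤ)‖ := by
    intro n
    rw [hconv, Complex.norm_real, Real.norm_eq_abs,
      abs_of_nonneg (tsum_nonneg (fun j => by positivity))]
    exact tsum_g_lower hα0 hβ0 hab n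
  -- restrict the summability to the nonnegative integers
  have hnat := hmem.comp_injective (fun m n h => by exact_mod_cast h :
    Function.Injective (Nat.cast : ℕ → ℤ))
  set p : ℝ := 2 * t + (1 - (α + β)) * 2 with hpdef
  have hp1 : -1 < p := by
    simp only [hpdef, hαdef, hβdef, hσdef, hεdef] at *
    linarith
  have hsump : Summable fun n : ℕ => ((1 + (n : ℝ))) ^ p := by
    refine Summable.of_nonneg_of_le (fun n => Real.rpow_nonneg (by positivity) _)
      (fun n => ?_) hnat
    have hpos : (0:ℝ) < 1 + (n:ℝ) := by positivity
    have habs : (1 + |((n:ℤ))| : ℝ) = 1 + (n:ℝ) := by push_cast; simp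
    calc ((1 + (n:ℝ))) ^ p
        = ((1 + (n:ℝ))) ^ (2*t) * (((1 + (n:ℝ))) ^ (1 - (α + β)))^2 := by
          rw [hpdef, Real.rpow_add hpos, ← Real.rpow_natCast
            (((1 + (n:ℝ))) ^ (1 - (α + β))) 2, ← Real.rpow_mul hpos.le]
          norm_num
      _ ≤ ((1 + |((n:ℤ))| : ℝ)) ^ (2*t) * ‖conv _ _ ((n:ℕ) : ℤ)‖^2 := by
          rw [habs]
          exact mul_le_mul_of_nonneg_left
            (pow_le_pow_left₀ (Real.rpow_nonneg hpos.le _) (hnormconv n) 2)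
            (Real.rpow_nonneg hpos.le _)
  have hsump' : Summable fun n : ℕ => ((n : ℝ)) ^ p := by
    rw [← summable_nat_add_iff 1]
    refine hsump.congr fun n => ?_
    push_cast
    ring_nf
  have := Real.summable_nat_rpow.1 hsump'
  linarith
end
end
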